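/- arXiv:1401.0844 — 2 statements merged into one kernel-verified Lean document; each statement's English description precedes it below -/
import Mathlib

section
/- Let X be a K×p real matrix of rank p with rational (or integer) entries, and F ⊆ {1,...,K} with |F| = p. If F contains no support of any nonzero integer vector in ker(Xᵀ), then the submatrix X_F is invertible; i.e., F is a saturated fraction. -/
open Matrix

theorem stmt_1 {K p : ℕ} (X : Matrix (Fin K) (Fin p) ℤ)
    (hX : (X.map (Int.cast : ℤ → ℚ)).rank = p)
    (e : Fin p → Fin K) (he : Function.Injective e)
    (hker : ∀ f : Fin K → ℤ, f ≠ 0 → Xᵀ.mulVec f = 0 →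
      ¬ ({j | f j ≠ 0} ⊆ Set.range e)) :
    (X.submatrix e id).det ≠ 0 := by
  intro h
  obtain ⟨v, hv, hvM⟩ := (Matrix.exists_vecMul_eq_zero_iff).2 h
  set f : Fin K → ℤ := Function.extend e v 0 with hfdef
  have hfe : ∀ i, f (e i) = v i := fun i => he.extend_apply v 0 i
  have hf0 : ∀ j, j ∉ Set.range e → f j = 0 := fun j hj => by
    rw [hfdef, Function.extend_apply' v (0 : Fin K → ℤ) j (by simpa [Set.mem_range] using hj)]
    rfl
  have hne : f ≠ 0 := by
    obtain ⟨i, hi⟩ := Function.ne_iff.1 hv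
    intro h0
    exact hi (by rw [← hfe i, h0]; rfl)
  have hmul : Xᵀ.mulVec f = 0 := by
    funext j'
    have key : ∑ j : Fin K, X j j' * f j = ∑ i : Fin p, v i * X (e i) j' := by
      rw [← Finset.sum_subset (Finset.subset_univ (Finset.univ.image e))
          (fun j _ hj => by rw [hf0 j (by simpa using hj), mul_zero]),
        Finset.sum_image (fun a _ b _ hab => he hab)]
      simp [hfe, mul_comm]
    have h2 := congrFun hvM j'
    simp only [Matrix.vecMul, dotProduct, Matrix.submatrix_apply, id_eq,
      Pi.zero_apply] at h2
    simp only [Matrix.mulVec, dotProduct, Matrix.transpose_apply, Pi.zero_apply]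
    rw [key, h2]
  exact hker f hne hmul (fun j hj => by
    by_contra hc
    exact hj (hf0 j hc))
end

section
/- Let X be a K×p integer matrix of rank p and F ⊆ {1,...,K} with |F| = p. Then F is a saturated fraction (det(X_F) ≠ 0) if and only if F does not contain the support of any circuit of A = Xᵀ. -/
open Matrix

def supp {K : ℕ} (f : Fin K → ℤ) : Set (Fin K) := {j | f j ≠ 0}

def IsCircuit {L K : ℕ} (A : Matrix (Fin L) (Fin K) ℤ) (f : Fin K → ℤ) : Prop :=
  f ≠ 0 ∧ A.mulVec f = 0 ∧
    ∀ g : Fin K → ℤ, g ≠ 0 → A.mulVec g = 0 → ¬ (supp g ⊂ supp f)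

lemma key {K p : ℕ} (X : Matrix (Fin K) (Fin p) ℤ) (e : Fin p → Fin K)
    (he : Function.Injective e) (f : Fin K → ℤ) (hs : supp f ⊆ Set.range e) :
    f ᵥ* X = (f ∘ e) ᵥ* (X.submatrix e id) := by
  funext c
  simp only [Matrix.vecMul, dotProduct, Matrix.submatrix_apply, id_eq,
    Function.comp_apply]
  have himg : ∑ i : Fin p, f (e i) * X (e i) c
      = ∑ j ∈ Finset.univ.image e, f j * X j c :=
    (Finset.sum_image (f := fun j => f j * X j c) (fun i _ j _ h => he h)).symm
  rw [himg]
  apply (Finset.sum_subset (Finset.subset_univ _) _).symm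
  intro j _ hj
  have : f j = 0 := by
    by_contra h
    exact hj (by
      obtain ⟨i, hi⟩ := hs h
      exact Finset.mem_image.2 ⟨i, Finset.mem_univ _, hi⟩)
  simp [this]

theorem stmt_2 {K p : ℕ} (X : Matrix (Fin K) (Fin p) ℤ)
    (hX : (X.map (Int.cast : ℤ → ℚ)).rank = p)
    (e : Fin p → Fin K) (he : Function.Injective e) :
    (X.submatrix e id).det ≠ 0 ↔
      ∀ f : Fin K → ℤ, IsCircuit Xᵀ f → ¬ (supp f ⊆ Set.range e) := by
  constructor
  · intro hdet f hf hsupp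
    obtain ⟨hf0, hker, _⟩ := hf
    have hker' : f ᵥ* X = 0 := by rwa [← Matrix.mulVec_transpose]
    have hsub : (f ∘ e) ᵥ* (X.submatrix e id) = 0 := by
      rw [← key X e he f hsupp]; exact hker'
    have hfz : f ∘ e = 0 := by
      by_contra h
      exact hdet ((Matrix.exists_vecMul_eq_zero_iff).1 ⟨f ∘ e, h, hsub⟩)
    apply hf0
    funext j
    by_cases hj : j ∈ supp f
    · obtain ⟨i, rfl⟩ := hsupp hj
      exact congrFun hfz i
    · simpa [supp] using hj
  · intro hcirc hdet
    -- get nonzero integer vector in left kernel of submatrix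
    obtain ⟨v, hv0, hv⟩ := (Matrix.exists_vecMul_eq_zero_iff).2 hdet
    classical
    -- extend to Fin K
    set f0 : Fin K → ℤ := fun j => if h : ∃ i, e i = j then v h.choose else 0 with hf0def
    have hcomp : f0 ∘ e = v := by
      funext i
      have h : ∃ i', e i' = e i := ⟨i, rfl⟩
      simp only [hf0def, Function.comp_apply, dif_pos h]
      rw [he h.choose_spec]
    have hsupp0 : supp f0 ⊆ Set.range e := by
      intro j hj
      by_contra hne
      have : f0 j = 0 := by
        simp only [hf0def]
        rw [dif_neg]
        exact fun ⟨i, hi⟩ => hne ⟨i, hi⟩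
      exact hj this
    have hker0 : Xᵀ.mulVec f0 = 0 := by
      rw [Matrix.mulVec_transpose, key X e he f0 hsupp0, hcomp, hv]
    have hne0 : f0 ≠ 0 := by
      intro h
      apply hv0
      rw [← hcomp, h]; rfl
    -- minimize support cardinality
    have hP : ∃ n, ∃ f : Fin K → ℤ, f ≠ 0 ∧ Xᵀ.mulVec f = 0 ∧ supp f ⊆ Set.range e ∧
        (supp f).ncard = n := ⟨_, f0, hne0, hker0, hsupp0, rfl⟩
    obtain ⟨f₁, h1, h2, h3, h4⟩ := Nat.find_spec hP
    refine hcirc f₁ ⟨h1, h2, ?_⟩ h3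
    intro g hg0 hgker hss
    have hgsupp : supp g ⊆ Set.range e := hss.1.trans h3
    have hlt : (supp g).ncard < (supp f₁).ncard :=
      Set.ncard_lt_ncard hss (Set.toFinite _)
    exact Nat.find_min hP (h4 ▸ hlt) ⟨g, hg0, hgker, hgsupp, rfl⟩
end
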